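/- arXiv:2305.10021 — 3 statements merged into one kernel-verified Lean document; each statement's English description precedes it below -/
import Mathlib

section
/- For a Guess&Check program P with guess part G_P (choice rules only) and check part C_P (a stratified program possibly with constraints whose head atoms are disjoint from the atoms of G_P), M is an answer set of P if and only if there exists an answer set M' of G_P and an answer set W of C_P ∪ fix_{G_P}(M') with M = M' ∪ W. -/
/-!
An answer set `M` of `G ∪ C` contains exactly one atom of each choice pair `a`, `na a`: it
contains one because of the rule `a ← ∼na a`, and if it contained both, `a` would be unsupported,
its own choice rule being blocked by `na a` and no check rule having `a` as head. For such an
interpretation `N`, the choice rules of the reduct at `N` hold in `X ⊆ N` exactly when `X`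
contains the chosen atoms `N ∩ atoms G`, and so do the facts and constraints of
`fix_G(N ∩ atoms G)`; hence `G ∪ C` and `C ∪ fix_G(N ∩ atoms G)` have the same answer sets at
`N`. Conversely, the facts and constraints force an answer set `W` of `C ∪ fix_G(M')` to meet the
atoms of `G` exactly in `M'`.
-/

inductive Lit (α : Type) where
  | pos (a : α) : Lit α
  | neg (a : α) : Lit α

def Lit.compl {α : Type} : Lit α → Lit α
  | .pos a => .neg a
  | .neg a => .pos a

/-- A rule with an optional atom head (`none` for constraints) and a body of literals. -/
structure Rule (α : Type) where
  head : Option α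
  body : Set (Lit α)

def posBody {α : Type} (r : Rule α) : Set α := {a | Lit.pos a ∈ r.body}
def negBody {α : Type} (r : Rule α) : Set α := {a | Lit.neg a ∈ r.body}

/-- The atoms (Herbrand base) of a program. -/
def atoms {α : Type} (P : Set (Rule α)) : Set α :=
  {a | ∃ r ∈ P, r.head = some a ∨ Lit.pos a ∈ r.body ∨ Lit.neg a ∈ r.body}

/-- `M'` is a model of the Gelfond–Lifschitz reduct `P^M`. -/
def modelsReduct {α : Type} (P : Set (Rule α)) (M M' : Set α) : Prop :=
  ∀ r ∈ P, (∀ a ∈ negBody r, a ∉ M) → posBody r ⊆ M' →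
    ∃ h, r.head = some h ∧ h ∈ M'

/-- `M` is an answer set of `P`: a subset of the atoms of `P` that is a
minimal model of the reduct `P^M`. -/
def isAnswerSet {α : Type} (P : Set (Rule α)) (M : Set α) : Prop :=
  M ⊆ atoms P ∧ modelsReduct P M M ∧ ∀ M' ⊂ M, ¬ modelsReduct P M M'

/-- `G` is a choice program: it consists exactly of the pairs of rules
`a ← ∼na(a)` and `na(a) ← ∼a` for the atoms `a` of some set `A`,
with fresh auxiliary atoms `na(a)`. -/
def isChoiceProgram {α : Type} (G : Set (Rule α)) : Prop :=
  ∃ (A : Set α) (na : α → α),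
    (∀ a ∈ A, na a ∉ A) ∧ Set.InjOn na A ∧
    G = {r | ∃ a ∈ A, r = ⟨some a, {Lit.neg (na a)}⟩ ∨ r = ⟨some (na a), {Lit.neg a}⟩}

/-- `P` is stratified: there is a level mapping such that positive dependencies
do not increase the level and negative dependencies strictly decrease it. -/
def stratified {α : Type} (P : Set (Rule α)) : Prop :=
  ∃ s : α → ℕ, ∀ r ∈ P, ∀ h, r.head = some h →
    (∀ a ∈ posBody r, s a ≤ s h) ∧ (∀ a ∈ negBody r, s a < s h)

/-- The head atoms of a program. -/
def heads {α : Type} (P : Set (Rule α)) : Set α :=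
  {h | ∃ r ∈ P, r.head = some h}

/-- `fix_Q(M)`: facts for the atoms of `Q` true in `M` and constraints
forbidding the atoms of `Q` false in `M`. -/
def fixProg {α : Type} (Q : Set (Rule α)) (M : Set α) : Set (Rule α) :=
  {r | ∃ a ∈ M ∩ atoms Q, r = ⟨some a, ∅⟩} ∪
  {r | ∃ a ∈ atoms Q \ M, r = ⟨none, {Lit.pos a}⟩}

section

variable {α : Type}

@[simp] theorem mem_posBody {r : Rule α} {a : α} : a ∈ posBody r ↔ Lit.pos a ∈ r.body := Iff.rfl

@[simp] theorem mem_negBody {r : Rule α} {a : α} : a ∈ negBody r ↔ Lit.neg a ∈ r.body := Iff.rfl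

theorem atoms_union (P Q : Set (Rule α)) : atoms (P ∪ Q) = atoms P ∪ atoms Q := by
  ext x
  simp only [atoms, Set.mem_union, Set.mem_ofPred_eq, or_and_right, exists_or]

theorem modelsReduct_union {P Q : Set (Rule α)} {M X : Set α} :
    modelsReduct (P ∪ Q) M X ↔ modelsReduct P M X ∧ modelsReduct Q M X := by
  simp only [modelsReduct, Set.mem_union, or_imp, forall_and]

theorem exists_supporting_rule_of_isAnswerSet {P : Set (Rule α)} {M : Set α}
    (hM : isAnswerSet P M) {a : α} (ha : a ∈ M) :
    ∃ r ∈ P, r.head = some a ∧ (∀ b ∈ negBody r, b ∉ M) ∧ posBody r ⊆ M := by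
  by_contra hunsupported
  refine hM.2.2 (M \ {a}) (Set.sdiff_singleton_ssubset.2 ha) fun r hr hneg hpos => ?_
  obtain ⟨h, hhead, hhM⟩ := hM.2.1 r hr hneg (hpos.trans Set.sdiff_subset)
  refine ⟨h, hhead, hhM, fun hha => hunsupported ⟨r, hr, ?_, hneg, hpos.trans Set.sdiff_subset⟩⟩
  rwa [← Set.mem_singleton_iff.1 hha]

theorem isAnswerSet_congr {P Q : Set (Rule α)} {M : Set α} (hatoms : atoms P = atoms Q)
    (hmodels : ∀ X ⊆ M, modelsReduct P M X ↔ modelsReduct Q M X) :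
    isAnswerSet P M ↔ isAnswerSet Q M := by
  unfold isAnswerSet
  rw [hatoms, hmodels M le_rfl]
  refine and_congr_right' (and_congr_right' (forall₂_congr fun X hX => ?_))
  rw [hmodels X hX.subset]

section Fix

variable (Q : Set (Rule α)) (K : Set α)

theorem atoms_fixProg : atoms (fixProg Q K) = atoms Q := by
  ext x
  simp only [atoms, fixProg, Set.mem_union, Set.mem_ofPred_eq, Set.mem_inter_iff, Set.mem_sdiff]
  constructor
  · rintro ⟨r, (⟨a, ⟨-, ha⟩, rfl⟩ | ⟨a, ⟨ha, -⟩, rfl⟩), hx⟩ <;> simp_all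
  · intro hx
    by_cases hxK : x ∈ K
    · exact ⟨_, Or.inl ⟨x, ⟨hxK, hx⟩, rfl⟩, Or.inl rfl⟩
    · exact ⟨_, Or.inr ⟨x, ⟨hx, hxK⟩, rfl⟩, by simp⟩

theorem modelsReduct_fixProg {N X : Set α} :
    modelsReduct (fixProg Q K) N X ↔ K ∩ atoms Q ⊆ X ∧ X ∩ atoms Q ⊆ K := by
  constructor
  · intro h
    refine ⟨fun a ha => ?_, fun a ha => by_contra fun haK => ?_⟩
    · obtain ⟨_, hhead, hX⟩ := h _ (Or.inl ⟨a, ha, rfl⟩) (by simp) (by simp [Set.subset_def])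
      cases hhead
      exact hX
    · obtain ⟨_, hhead, -⟩ := h _ (Or.inr ⟨a, ⟨ha.2, haK⟩, rfl⟩) (by simp)
        (by simpa [Set.subset_def] using ha.1)
      cases hhead
  · rintro ⟨hfacts, hconstraints⟩ r (⟨a, ha, rfl⟩ | ⟨a, ha, rfl⟩) - hpos
    · exact ⟨a, rfl, hfacts ha⟩
    · exact absurd (hconstraints ⟨hpos (by simp), ha.1⟩) ha.2

end Fix

def choiceProg (A : Set α) (na : α → α) : Set (Rule α) :=
  {r | ∃ a ∈ A, r = ⟨some a, {Lit.neg (na a)}⟩ ∨ r = ⟨some (na a), {Lit.neg a}⟩}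

def Chooses (A : Set α) (na : α → α) (N : Set α) : Prop :=
  ∀ a ∈ A, a ∈ N ↔ na a ∉ N

section Choice

variable {A : Set α} {na : α → α}

theorem atoms_choiceProg : atoms (choiceProg A na) = A ∪ na '' A := by
  ext x
  simp only [atoms, choiceProg, Set.mem_ofPred_eq, Set.mem_union, Set.mem_image]
  constructor
  · rintro ⟨r, ⟨a, ha, rfl | rfl⟩, hx⟩ <;> simp only [Option.some.injEq, Set.mem_singleton_iff, reduceCtorEq, Lit.neg.injEq, false_or] at hx <;> rcases hx with rfl | rfl <;> aesop
  · rintro (hx | ⟨a, ha, rfl⟩)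
    · exact ⟨_, ⟨x, hx, Or.inl rfl⟩, Or.inl rfl⟩
    · exact ⟨_, ⟨a, ha, Or.inr rfl⟩, Or.inl rfl⟩

theorem mem_atoms_choiceProg {a : α} (ha : a ∈ A) : a ∈ atoms (choiceProg A na) :=
  atoms_choiceProg ▸ Or.inl ha

theorem na_mem_atoms_choiceProg {a : α} (ha : a ∈ A) : na a ∈ atoms (choiceProg A na) :=
  atoms_choiceProg ▸ Or.inr (Set.mem_image_of_mem na ha)

theorem modelsReduct_choiceProg {N X : Set α} :
    modelsReduct (choiceProg A na) N X ↔ ∀ a ∈ A, (na a ∉ N → a ∈ X) ∧ (a ∉ N → na a ∈ X) := by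
  simp [modelsReduct, choiceProg, or_imp, forall_and, forall_comm (α := Rule α), Set.subset_def]

theorem Chooses.modelsReduct_choiceProg_iff {N X : Set α} (hN : Chooses A na N) :
    modelsReduct (choiceProg A na) N X ↔ N ∩ atoms (choiceProg A na) ⊆ X := by
  rw [modelsReduct_choiceProg, atoms_choiceProg]
  constructor
  · rintro h x ⟨hxN, hx | ⟨a, ha, rfl⟩⟩
    · exact (h x hx).1 ((hN x hx).1 hxN)
    · exact (h a ha).2 fun haN => (hN a ha).1 haN hxN
  · intro h a ha
    exact ⟨fun hna => h ⟨(hN a ha).2 hna, Or.inl ha⟩,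
      fun haN => h ⟨not_not.1 (mt (hN a ha).2 haN), Or.inr ⟨a, ha, rfl⟩⟩⟩

theorem chooses_inter_atoms_choiceProg_iff {N : Set α} :
    Chooses A na (N ∩ atoms (choiceProg A na)) ↔ Chooses A na N :=
  forall₂_congr fun _ ha => by
    simp only [Set.mem_inter_iff, mem_atoms_choiceProg ha, na_mem_atoms_choiceProg ha, and_true]

theorem chooses_of_isAnswerSet (hfresh : ∀ a ∈ A, na a ∉ A) {C : Set (Rule α)}
    (hC : ∀ a ∈ A, a ∉ heads C) {M : Set α} (hM : isAnswerSet (choiceProg A na ∪ C) M) :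
    Chooses A na M := by
  intro a ha
  constructor
  · intro haM hnaM
    obtain ⟨r, hr | hr, hhead, hneg, -⟩ := exists_supporting_rule_of_isAnswerSet hM haM
    · obtain ⟨b, hb, rfl | rfl⟩ := hr <;> simp only [Option.some.injEq] at hhead <;> subst hhead
      · exact hneg (na b) (by simp) hnaM
      · exact hfresh b hb ha
    · exact hC a ha ⟨r, hr, hhead⟩
  · exact ((modelsReduct_choiceProg.1 (modelsReduct_union.1 hM.2.1).1) a ha).1

theorem isAnswerSet_choiceProg_iff (hfresh : ∀ a ∈ A, na a ∉ A) {N : Set α} :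
    isAnswerSet (choiceProg A na) N ↔ N ⊆ atoms (choiceProg A na) ∧ Chooses A na N := by
  refine ⟨fun hN => ⟨hN.1, ?_⟩, fun ⟨hsub, hN⟩ => ?_⟩
  · exact chooses_of_isAnswerSet hfresh (C := ∅) (by simp [heads]) (by rwa [Set.union_empty])
  · rw [← Set.inter_eq_left] at hsub
    refine ⟨hsub ▸ Set.inter_subset_right, hN.modelsReduct_choiceProg_iff.2 Set.inter_subset_left,
      fun X hX hmodels => hX.not_subset ?_⟩
    rw [← hsub]
    exact hN.modelsReduct_choiceProg_iff.1 hmodels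

theorem Chooses.isAnswerSet_choiceProg_union_iff {C : Set (Rule α)} {N : Set α}
    (hN : Chooses A na N) :
    isAnswerSet (choiceProg A na ∪ C) N ↔
      isAnswerSet (C ∪ fixProg (choiceProg A na) (N ∩ atoms (choiceProg A na))) N := by
  refine isAnswerSet_congr (by rw [atoms_union, atoms_union, atoms_fixProg, Set.union_comm])
    fun X hX => ?_
  rw [modelsReduct_union, modelsReduct_union, modelsReduct_fixProg,
    hN.modelsReduct_choiceProg_iff, Set.inter_assoc, Set.inter_self,
    and_iff_left (Set.inter_subset_inter_left _ hX), and_comm]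

end Choice

end

theorem guessCheck_modularity_general {α : Type} (G C : Set (Rule α))
    (hG : isChoiceProgram G)
    (hdisj : heads C ∩ atoms G = ∅) (M : Set α) :
    isAnswerSet (G ∪ C) M ↔
      ∃ M' W : Set α, isAnswerSet G M' ∧ isAnswerSet (C ∪ fixProg G M') W ∧
        M = M' ∪ W := by
  obtain ⟨A, na, hfresh, -, hGA⟩ := hG
  change G = choiceProg A na at hGA
  subst hGA
  have hC : ∀ a ∈ A, a ∉ heads C := fun a ha hhead =>
    Set.eq_empty_iff_forall_notMem.1 hdisj a ⟨hhead, mem_atoms_choiceProg ha⟩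
  constructor
  · intro hM
    have hMchoice := chooses_of_isAnswerSet hfresh hC hM
    exact ⟨M ∩ atoms (choiceProg A na), M,
      (isAnswerSet_choiceProg_iff hfresh).2
        ⟨Set.inter_subset_right, chooses_inter_atoms_choiceProg_iff.2 hMchoice⟩,
      hMchoice.isAnswerSet_choiceProg_union_iff.1 hM,
      (Set.union_eq_self_of_subset_left Set.inter_subset_left).symm⟩
  · rintro ⟨M', W, hM', hW, rfl⟩
    obtain ⟨hM'atoms, hM'choice⟩ := (isAnswerSet_choiceProg_iff hfresh).1 hM'
    obtain ⟨hfacts, hconstraints⟩ :=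
      (modelsReduct_fixProg _ _).1 (modelsReduct_union.1 hW.2.1).2
    have hWM' : W ∩ atoms (choiceProg A na) = M' :=
      hconstraints.antisymm fun x hx => ⟨hfacts ⟨hx, hM'atoms hx⟩, hM'atoms hx⟩
    have hWchoice : Chooses A na W := chooses_inter_atoms_choiceProg_iff.1 (hWM' ▸ hM'choice)
    have hM'W : M' ⊆ W := hWM' ▸ Set.inter_subset_left
    rw [Set.union_eq_self_of_subset_left hM'W]
    exact hWchoice.isAnswerSet_choiceProg_union_iff.2 (hWM' ▸ hW)

/-- Modularity of Guess&Check programs: for a Guess&Check program with guess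
part `G` (choice rules only) and check part `C` (stratified, possibly with
constraints, whose head atoms do not occur among the atoms of `G`),
`M` is an answer set of `G ∪ C` iff `M = M' ∪ W` for some answer set `M'` of
`G` and some answer set `W` of `C ∪ fix_G(M')`. -/
theorem guessCheck_modularity {α : Type} (G C : Set (Rule α))
    (hG : isChoiceProgram G) (hC : stratified C)
    (hdisj : heads C ∩ atoms G = ∅) (M : Set α) :
    isAnswerSet (G ∪ C) M ↔
      ∃ M' W : Set α, isAnswerSet G M' ∧ isAnswerSet (C ∪ fixProg G M') W ∧
        M = M' ∪ W :=
  guessCheck_modularity_general G C hG hdisj M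
end

section
/- A stratified normal program (its dependency graph has no cycle through a negative arc) has a total well-founded model, and hence at most one answer set, which — if the program has no constraints — exists and equals the well-founded model. -/
def bodyFalse {α : Type} (I : Set (Lit α)) (B : Set (Lit α)) : Prop :=
  ∃ l ∈ B, l.compl ∈ I

def unfounded {α : Type} (P : Set (Rule α)) (I : Set (Lit α)) (U : Set α) : Prop :=
  ∀ r ∈ P, ∀ a, r.head = some a → a ∈ U →
    bodyFalse I r.body ∨ ∃ b ∈ U, Lit.pos b ∈ r.body

def TP {α : Type} (P : Set (Rule α)) (I : Set (Lit α)) : Set α :=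
  {a | ∃ r ∈ P, r.head = some a ∧ r.body ⊆ I}

def GUS {α : Type} (P : Set (Rule α)) (I : Set (Lit α)) : Set α :=
  ⋃₀ {U | unfounded P I U}

/-- The well-founded operator `W_P(I) = T_P(I) ∪ ¬U_P(I)`. -/
def WP {α : Type} (P : Set (Rule α)) (I : Set (Lit α)) : Set (Lit α) :=
  (Lit.pos '' TP P I) ∪ (Lit.neg '' GUS P I)

/-- `W` is the well-founded model of `P`: the least fixed point of `W_P`. -/
def isWFModel {α : Type} (P : Set (Rule α)) (W : Set (Lit α)) : Prop :=
  WP P W = W ∧ ∀ I, WP P I = I → W ⊆ I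

section Aux

variable {α : Type}

lemma pos_mem_WP {P : Set (Rule α)} {I : Set (Lit α)} {a : α} :
    Lit.pos a ∈ WP P I ↔ a ∈ TP P I := by
  constructor
  · rintro (⟨b, hb, h⟩ | ⟨b, hb, h⟩)
    · cases h; exact hb
    · cases h
  · intro h; exact Or.inl ⟨a, h, rfl⟩

lemma neg_mem_WP {P : Set (Rule α)} {I : Set (Lit α)} {a : α} :
    Lit.neg a ∈ WP P I ↔ a ∈ GUS P I := by
  constructor
  · rintro (⟨b, hb, h⟩ | ⟨b, hb, h⟩)
    · cases h
    · cases h; exact hb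
  · intro h; exact Or.inr ⟨a, h, rfl⟩

lemma unfounded_subset_GUS {P : Set (Rule α)} {I : Set (Lit α)} {U : Set α}
    (h : unfounded P I U) : U ⊆ GUS P I :=
  fun a ha => ⟨U, h, ha⟩

lemma GUS_unfounded (P : Set (Rule α)) (I : Set (Lit α)) : unfounded P I (GUS P I) := by
  rintro r hr a ha ⟨U, hU, haU⟩
  rcases hU r hr a ha haU with h | ⟨b, hb, hpb⟩
  · exact Or.inl h
  · exact Or.inr ⟨b, unfounded_subset_GUS hU hb, hpb⟩

/-- Totality: for a stratified program, any fixed point of `WP` is total. -/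
lemma total_of_stratified {P : Set (Rule α)} (s : α → ℕ)
    (hs : ∀ r ∈ P, ∀ h, r.head = some h →
      (∀ a ∈ posBody r, s a ≤ s h) ∧ (∀ a ∈ negBody r, s a < s h))
    {W : Set (Lit α)} (hfix : WP P W = W) :
    ∀ a, Lit.pos a ∉ W → Lit.neg a ∈ W := by
  suffices H : ∀ n a, s a ≤ n → Lit.pos a ∉ W → Lit.neg a ∈ W from
    fun a ha => H (s a) a le_rfl ha
  intro n
  induction n using Nat.strong_induction_on with
  | _ n IH =>
  intro a hsa hpa
  have hU : unfounded P W {x | s x ≤ n ∧ Lit.pos x ∉ W} := by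
    intro r hr x hhead hx
    by_contra hcon
    push_neg at hcon
    obtain ⟨hnbf, hnb⟩ := hcon
    have hbody : r.body ⊆ W := by
      intro l hl
      cases l with
      | pos b =>
        by_contra hbW
        exact hnb b ⟨le_trans ((hs r hr x hhead).1 b hl) hx.1, hbW⟩ hl
      | neg c =>
        have hc : Lit.pos c ∉ W := fun hcW => hnbf ⟨Lit.neg c, hl, hcW⟩
        have hlt : s c < s x := (hs r hr x hhead).2 c hl
        exact IH (s c) (lt_of_lt_of_le hlt hx.1) c le_rfl hc
    have : Lit.pos x ∈ W := by
      rw [← hfix]; exact pos_mem_WP.mpr ⟨r, hr, hhead, hbody⟩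
    exact hx.2 this
  have : a ∈ GUS P W := unfounded_subset_GUS hU ⟨hsa, hpa⟩
  rw [← hfix]; exact neg_mem_WP.mpr this

def interpOf (M : Set α) : Set (Lit α) := (Lit.pos '' M) ∪ (Lit.neg '' Mᶜ)

lemma pos_mem_interpOf {M : Set α} {a : α} : Lit.pos a ∈ interpOf M ↔ a ∈ M := by
  constructor
  · rintro (⟨b, hb, h⟩ | ⟨b, hb, h⟩)
    · cases h; exact hb
    · cases h
  · intro h; exact Or.inl ⟨a, h, rfl⟩

lemma neg_mem_interpOf {M : Set α} {a : α} : Lit.neg a ∈ interpOf M ↔ a ∉ M := by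
  constructor
  · rintro (⟨b, hb, h⟩ | ⟨b, hb, h⟩)
    · cases h
    · cases h; exact hb
  · intro h; exact Or.inr ⟨a, h, rfl⟩

/-- The total interpretation of an answer set is a fixed point of `WP`. -/
lemma interpOf_fixed {P : Set (Rule α)} {M : Set α} (hM : isAnswerSet P M) :
    WP P (interpOf M) = interpOf M := by
  obtain ⟨hsub, hmod, hmin⟩ := hM
  have hTP : TP P (interpOf M) = M := by
    ext a
    constructor
    · rintro ⟨r, hr, hhead, hbody⟩
      obtain ⟨h, hh, hhM⟩ := hmod r hr (fun c hc => neg_mem_interpOf.1 (hbody hc))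
        (fun b hb => pos_mem_interpOf.1 (hbody hb))
      rw [hhead] at hh
      injection hh with hh
      rw [hh]; exact hhM
    · intro haM
      have hne : M \ {a} ⊂ M := by
        constructor
        · exact Set.diff_subset
        · intro hMsub
          exact (hMsub haM).2 rfl
      have hnm := hmin (M \ {a}) hne
      rw [modelsReduct] at hnm
      push_neg at hnm
      obtain ⟨r, hr, hneg, hpos, hnh⟩ := hnm
      obtain ⟨h, hh, hhM⟩ := hmod r hr hneg (fun b hb => (hpos hb).1)
      have hha : h = a := by
        by_contra hne'
        exact hnh h hh ⟨hhM, hne'⟩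
      refine ⟨r, hr, by rw [← hha]; exact hh, ?_⟩
      intro l hl
      cases l with
      | pos b => exact pos_mem_interpOf.2 (hpos hl).1
      | neg c => exact neg_mem_interpOf.2 (hneg c hl)
  have hGUSsub : ∀ U, unfounded P (interpOf M) U → ∀ a ∈ U, a ∉ M := by
    intro U hU a haU haM
    have hss : M \ U ⊂ M := ⟨Set.diff_subset, fun hMsub => (hMsub haM).2 haU⟩
    apply hmin _ hss
    intro r hr hneg hpos
    obtain ⟨h, hh, hhM⟩ := hmod r hr hneg (fun b hb => (hpos hb).1)
    refine ⟨h, hh, hhM, ?_⟩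
    intro hhU
    rcases hU r hr h hh hhU with ⟨l, hl, hcompl⟩ | ⟨b, hbU, hpb⟩
    · cases l with
      | pos b => exact neg_mem_interpOf.1 hcompl (hpos hl).1
      | neg c => exact hneg c hl (pos_mem_interpOf.1 hcompl)
    · exact (hpos hpb).2 hbU
  have hMc : unfounded P (interpOf M) Mᶜ := by
    intro r hr a hhead haM
    by_contra hcon
    push_neg at hcon
    obtain ⟨hnbf, hposM⟩ := hcon
    have hneg : ∀ c ∈ negBody r, c ∉ M :=
      fun c hc hcM => hnbf ⟨Lit.neg c, hc, pos_mem_interpOf.2 hcM⟩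
    have hpos : posBody r ⊆ M := by
      intro b hb
      by_contra hbM
      exact hposM b hbM hb
    obtain ⟨h, hh, hhM⟩ := hmod r hr hneg hpos
    rw [hhead] at hh
    injection hh with hh
    subst hh
    exact haM hhM
  have hGUS : GUS P (interpOf M) = Mᶜ := by
    apply Set.Subset.antisymm
    · rintro a ⟨U, hU, haU⟩
      exact hGUSsub U hU a haU
    · exact unfounded_subset_GUS hMc
  rw [WP, hTP, hGUS, interpOf]

/-- Every answer set equals the positive part of the well-founded model. -/
lemma answerSet_eq {P : Set (Rule α)} {W : Set (Lit α)} (hW : isWFModel P W)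
    (htot : ∀ a, Lit.pos a ∉ W → Lit.neg a ∈ W)
    {M : Set α} (hM : isAnswerSet P M) : M = {a | Lit.pos a ∈ W} := by
  have hWsub : W ⊆ interpOf M := hW.2 _ (interpOf_fixed hM)
  ext a
  simp only [Set.mem_setOf_eq]
  constructor
  · intro haM
    by_contra hpa
    exact neg_mem_interpOf.1 (hWsub (htot a hpa)) haM
  · intro hpa
    exact pos_mem_interpOf.1 (hWsub hpa)

/-! ### The perfect model construction (for consistency of `W`) -/

def Gop (P : Set (Rule α)) (s : α → ℕ) (n : ℕ) (D : Set α) : Set α →o Set α where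
  toFun X := {h | ∃ r ∈ P, r.head = some h ∧ s h ≤ n ∧ posBody r ⊆ X ∧ ∀ c ∈ negBody r, c ∉ D}
  monotone' := by
    rintro X Y hXY h ⟨r, hr, h1, h2, h3, h4⟩
    exact ⟨r, hr, h1, h2, h3.trans hXY, h4⟩

noncomputable def Cum (P : Set (Rule α)) (s : α → ℕ) : ℕ → Set α
  | 0 => OrderHom.lfp (Gop P s 0 ∅)
  | (n+1) => OrderHom.lfp (Gop P s (n+1) (Cum P s n))

def Dprev (P : Set (Rule α)) (s : α → ℕ) : ℕ → Set α
  | 0 => ∅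
  | (n+1) => Cum P s n

lemma Cum_eq (P : Set (Rule α)) (s : α → ℕ) :
    ∀ n, Cum P s n = OrderHom.lfp (Gop P s n (Dprev P s n))
  | 0 => rfl
  | (_+1) => rfl

lemma Cum_fixed (P : Set (Rule α)) (s : α → ℕ) (n : ℕ) :
    (Gop P s n (Dprev P s n)) (Cum P s n) = Cum P s n := by
  rw [Cum_eq]; exact OrderHom.map_lfp _

lemma Cum_level (P : Set (Rule α)) (s : α → ℕ) (n : ℕ) : Cum P s n ⊆ {a | s a ≤ n} := by
  rw [Cum_eq]
  refine OrderHom.lfp_le _ ?_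
  rintro h ⟨r, hr, h1, h2, h3, h4⟩
  exact h2

variable {P : Set (Rule α)} {s : α → ℕ}

lemma Cum_step
    (hs : ∀ r ∈ P, ∀ h, r.head = some h →
      (∀ a ∈ posBody r, s a ≤ s h) ∧ (∀ a ∈ negBody r, s a < s h)) :
    ∀ n, Cum P s n ⊆ Cum P s (n+1) ∧ Cum P s (n+1) ∩ {a | s a ≤ n} ⊆ Cum P s n := by
  intro n
  induction n with
  | zero =>
    constructor
    · rw [Cum_eq P s 0]
      refine OrderHom.lfp_le _ ?_
      rintro h ⟨r, hr, h1, h2, h3, h4⟩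
      rw [← Cum_fixed P s 1]
      refine ⟨r, hr, h1, h2.trans (Nat.le_succ 0), h3, ?_⟩
      intro c hc _
      have := (hs r hr h h1).2 c hc
      omega
    · have hsub : Cum P s 1 ⊆ Cum P s 0 ∪ {a | 0 < s a} := by
        rw [Cum_eq P s 1]
        refine OrderHom.lfp_le _ ?_
        rintro h ⟨r, hr, h1, h2, h3, h4⟩
        by_cases hsh : s h ≤ 0
        · left
          rw [← Cum_fixed P s 0]
          refine ⟨r, hr, h1, hsh, ?_, fun c hc hcD => hcD⟩
          intro b hb
          have hsb : s b ≤ s h := (hs r hr h h1).1 b hb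
          rcases h3 hb with hbC | hbgt
          · exact hbC
          · exact absurd hbgt (by simp only [Set.mem_setOf_eq]; omega)
        · exact Or.inr (by simp only [Set.mem_setOf_eq]; omega)
      rintro a ⟨ha1, ha2⟩
      rcases hsub ha1 with h | h
      · exact h
      · simp only [Set.mem_setOf_eq] at h ha2; omega
  | succ n ih =>
    have mono : Cum P s (n+1) ⊆ Cum P s (n+1+1) := by
      rw [Cum_eq P s (n+1)]
      refine OrderHom.lfp_le _ ?_
      rintro h ⟨r, hr, h1, h2, h3, h4⟩
      rw [← Cum_fixed P s (n+1+1)]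
      refine ⟨r, hr, h1, h2.trans (Nat.le_succ _), h3, ?_⟩
      intro c hc hcC
      have hlt : s c < s h := (hs r hr h h1).2 c hc
      exact h4 c hc (ih.2 ⟨hcC, by simp only [Set.mem_setOf_eq]; omega⟩)
    refine ⟨mono, ?_⟩
    have hsub : Cum P s (n+1+1) ⊆ Cum P s (n+1) ∪ {a | n+1 < s a} := by
      rw [Cum_eq P s (n+1+1)]
      refine OrderHom.lfp_le _ ?_
      rintro h ⟨r, hr, h1, h2, h3, h4⟩
      by_cases hsh : s h ≤ n+1
      · left
        rw [← Cum_fixed P s (n+1)]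
        refine ⟨r, hr, h1, hsh, ?_, ?_⟩
        · intro b hb
          have hsb : s b ≤ s h := (hs r hr h h1).1 b hb
          rcases h3 hb with hbC | hbgt
          · exact hbC
          · exact absurd hbgt (by simp only [Set.mem_setOf_eq]; omega)
        · intro c hc hcD
          exact h4 c hc (ih.1 hcD)
      · exact Or.inr (by simp only [Set.mem_setOf_eq]; omega)
    rintro a ⟨ha1, ha2⟩
    rcases hsub ha1 with h | h
    · exact h
    · simp only [Set.mem_setOf_eq] at h ha2; omega

lemma Cum_mono
    (hs : ∀ r ∈ P, ∀ h, r.head = some h →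
      (∀ a ∈ posBody r, s a ≤ s h) ∧ (∀ a ∈ negBody r, s a < s h))
    {m n : ℕ} (hmn : m ≤ n) : Cum P s m ⊆ Cum P s n := by
  induction hmn with
  | refl => exact subset_rfl
  | step _ ih => exact ih.trans (Cum_step hs _).1

lemma Cum_stab
    (hs : ∀ r ∈ P, ∀ h, r.head = some h →
      (∀ a ∈ posBody r, s a ≤ s h) ∧ (∀ a ∈ negBody r, s a < s h))
    {m n : ℕ} (hmn : m ≤ n) : Cum P s n ∩ {a | s a ≤ m} ⊆ Cum P s m := by
  induction hmn with
  | refl => exact Set.inter_subset_left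
  | @step k hk ih =>
    rintro a ⟨ha1, ha2⟩
    simp only [Set.mem_setOf_eq] at ha2
    exact ih ⟨(Cum_step hs k).2 ⟨ha1, show s a ≤ k from le_trans ha2 hk⟩, ha2⟩

def Mstar (P : Set (Rule α)) (s : α → ℕ) : Set α := ⋃ n, Cum P s n

lemma Cum_subset_Mstar (n : ℕ) : Cum P s n ⊆ Mstar P s :=
  Set.subset_iUnion (Cum P s) n

lemma mem_Mstar_iff
    (hs : ∀ r ∈ P, ∀ h, r.head = some h →
      (∀ a ∈ posBody r, s a ≤ s h) ∧ (∀ a ∈ negBody r, s a < s h))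
    {a : α} : a ∈ Mstar P s ↔ a ∈ Cum P s (s a) := by
  constructor
  · intro ha
    obtain ⟨n, hn⟩ := Set.mem_iUnion.1 ha
    have hle : s a ≤ n := Cum_level P s n hn
    exact Cum_stab hs hle ⟨hn, show s a ≤ s a from le_rfl⟩
  · intro ha
    exact Set.mem_iUnion.2 ⟨s a, ha⟩

lemma Dprev_subset_Mstar : ∀ n, Dprev P s n ⊆ Mstar P s
  | 0 => Set.empty_subset _
  | (n+1) => Cum_subset_Mstar n

lemma TP_Istar
    (hs : ∀ r ∈ P, ∀ h, r.head = some h →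
      (∀ a ∈ posBody r, s a ≤ s h) ∧ (∀ a ∈ negBody r, s a < s h)) :
    TP P (interpOf (Mstar P s)) = Mstar P s := by
  ext h0
  constructor
  · rintro ⟨r, hr, hhead, hbody⟩
    have hmem : h0 ∈ Cum P s (s h0) := by
      rw [← Cum_fixed P s (s h0)]
      refine ⟨r, hr, hhead, le_rfl, ?_, ?_⟩
      · intro b hb
        have hbM : b ∈ Mstar P s := pos_mem_interpOf.1 (hbody hb)
        exact Cum_mono hs ((hs r hr h0 hhead).1 b hb) ((mem_Mstar_iff hs).1 hbM)
      · intro c hc hcD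
        exact neg_mem_interpOf.1 (hbody hc) (Dprev_subset_Mstar _ hcD)
    exact Cum_subset_Mstar _ hmem
  · intro hM
    obtain ⟨n, hn⟩ := Set.mem_iUnion.1 hM
    rw [← Cum_fixed P s n] at hn
    obtain ⟨r, hr, hhead, hshn, hpos, hneg⟩ := hn
    refine ⟨r, hr, hhead, ?_⟩
    intro l hl
    cases l with
    | pos b => exact pos_mem_interpOf.2 (Cum_subset_Mstar n (hpos hl))
    | neg c =>
      refine neg_mem_interpOf.2 ?_
      intro hcM
      have hlt : s c < s h0 := (hs r hr h0 hhead).2 c hl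
      cases n with
      | zero => omega
      | succ m =>
        exact hneg c hl (Cum_mono hs (by omega : s c ≤ m) ((mem_Mstar_iff hs).1 hcM))

lemma Mstar_compl_unfounded
    (hs : ∀ r ∈ P, ∀ h, r.head = some h →
      (∀ a ∈ posBody r, s a ≤ s h) ∧ (∀ a ∈ negBody r, s a < s h)) :
    unfounded P (interpOf (Mstar P s)) (Mstar P s)ᶜ := by
  intro r hr a hhead ha
  by_contra hcon
  push_neg at hcon
  obtain ⟨hnbf, hposM⟩ := hcon
  apply ha
  rw [← TP_Istar hs]
  refine ⟨r, hr, hhead, ?_⟩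
  intro l hl
  cases l with
  | pos b =>
    refine pos_mem_interpOf.2 ?_
    by_contra hb
    exact hposM b hb hl
  | neg c =>
    exact neg_mem_interpOf.2 (fun hc => hnbf ⟨Lit.neg c, hl, pos_mem_interpOf.2 hc⟩)

lemma GUS_Istar
    (hs : ∀ r ∈ P, ∀ h, r.head = some h →
      (∀ a ∈ posBody r, s a ≤ s h) ∧ (∀ a ∈ negBody r, s a < s h)) :
    GUS P (interpOf (Mstar P s)) = (Mstar P s)ᶜ := by
  have key : ∀ n, Cum P s n ⊆ (GUS P (interpOf (Mstar P s)))ᶜ := by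
    intro n
    rw [Cum_eq]
    refine OrderHom.lfp_le _ ?_
    rintro h ⟨r, hr, hhead, hshn, hpos, hneg⟩ hG
    rcases GUS_unfounded P _ r hr h hhead hG with ⟨l, hl, hcompl⟩ | ⟨b, hbG, hpb⟩
    · cases l with
      | pos b =>
        have hbM : b ∉ Mstar P s := neg_mem_interpOf.1 hcompl
        exact (hpos hl) (unfounded_subset_GUS (Mstar_compl_unfounded hs) hbM)
      | neg c =>
        have hcM : c ∈ Mstar P s := pos_mem_interpOf.1 hcompl
        have hlt : s c < s h := (hs r hr h hhead).2 c hl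
        cases n with
        | zero => omega
        | succ m =>
          exact hneg c hl (Cum_mono hs (by omega : s c ≤ m) ((mem_Mstar_iff hs).1 hcM))
    · exact (hpos hpb) hbG
  apply Set.Subset.antisymm
  · intro a haG haM
    obtain ⟨n, hn⟩ := Set.mem_iUnion.1 haM
    exact key n hn haG
  · exact unfounded_subset_GUS (Mstar_compl_unfounded hs)

lemma WP_Istar
    (hs : ∀ r ∈ P, ∀ h, r.head = some h →
      (∀ a ∈ posBody r, s a ≤ s h) ∧ (∀ a ∈ negBody r, s a < s h)) :
    WP P (interpOf (Mstar P s)) = interpOf (Mstar P s) := by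
  rw [WP, TP_Istar hs, GUS_Istar hs, interpOf]

lemma W_consistent {W : Set (Lit α)} (hW : isWFModel P W)
    (hs : ∀ r ∈ P, ∀ h, r.head = some h →
      (∀ a ∈ posBody r, s a ≤ s h) ∧ (∀ a ∈ negBody r, s a < s h)) :
    ∀ a, Lit.pos a ∈ W → Lit.neg a ∉ W := by
  intro a h1 h2
  have hsub := hW.2 _ (WP_Istar hs)
  exact neg_mem_interpOf.1 (hsub h2) (pos_mem_interpOf.1 (hsub h1))

end Aux

/-- A stratified (finite) normal program has a total well-founded model, hence
at most one answer set, which — if the program has no constraints — exists and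
equals the well-founded model. -/
theorem stratified_total_wf {α : Type} (P : Set (Rule α)) (hfin : P.Finite)
    (hstrat : stratified P) (W : Set (Lit α)) (hW : isWFModel P W) :
    (∀ a ∈ atoms P, Lit.pos a ∈ W ∨ Lit.neg a ∈ W) ∧
    (∀ M₁ M₂ : Set α, isAnswerSet P M₁ → isAnswerSet P M₂ → M₁ = M₂) ∧
    ((∀ r ∈ P, r.head ≠ none) → isAnswerSet P {a | Lit.pos a ∈ W}) := by
  obtain ⟨s, hs⟩ := hstrat
  have htot : ∀ a, Lit.pos a ∉ W → Lit.neg a ∈ W := total_of_stratified s hs hW.1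
  have hcons : ∀ a, Lit.pos a ∈ W → Lit.neg a ∉ W := W_consistent hW hs
  refine ⟨fun a _ => or_iff_not_imp_left.2 (htot a), ?_, ?_⟩
  · intro M₁ M₂ h1 h2
    rw [answerSet_eq hW htot h1, answerSet_eq hW htot h2]
  · intro hnc
    refine ⟨?_, ?_, ?_⟩
    · intro a ha
      have h1 : Lit.pos a ∈ WP P W := by rw [hW.1]; exact ha
      obtain ⟨r, hr, hhead, _⟩ := pos_mem_WP.1 h1
      exact ⟨r, hr, Or.inl hhead⟩
    · intro r hr hneg hpos
      cases hh : r.head with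
      | none => exact absurd hh (hnc r hr)
      | some h0 =>
        refine ⟨h0, rfl, ?_⟩
        have hbody : r.body ⊆ W := by
          intro l hl
          cases l with
          | pos b => exact hpos hl
          | neg c => exact htot c (hneg c hl)
        show Lit.pos h0 ∈ W
        rw [← hW.1]
        exact pos_mem_WP.2 ⟨r, hr, hh, hbody⟩
    · intro M' hM' hmod
      have hUnf : unfounded P W ({a | Lit.pos a ∈ W} \ M') := by
        intro r hr a hhead ha
        by_contra hcon
        push_neg at hcon
        obtain ⟨hnbf, hposU⟩ := hcon
        have hneg : ∀ c ∈ negBody r, c ∉ {a | Lit.pos a ∈ W} :=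
          fun c hc hcT => hnbf ⟨Lit.neg c, hc, hcT⟩
        have hpos : posBody r ⊆ M' := by
          intro b hb
          have hbT : Lit.pos b ∈ W := by
            by_contra hbT
            exact hnbf ⟨Lit.pos b, hb, htot b hbT⟩
          by_contra hbM'
          exact hposU b ⟨hbT, hbM'⟩ hb
        obtain ⟨h0, hh0, hh0M⟩ := hmod r hr hneg hpos
        rw [hhead] at hh0
        injection hh0 with hh0
        subst hh0
        exact ha.2 hh0M
      obtain ⟨a, haT, haM'⟩ := Set.exists_of_ssubset hM'
      have hna : Lit.neg a ∈ W := by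
        rw [← hW.1]
        exact neg_mem_WP.2 (unfounded_subset_GUS hUnf ⟨haT, haM'⟩)
      exact hcons a haT hna
end

section
/- For the rewriting of a universal Guess&Check subprogram: if M_G is an answer set of the guess part G_{P} and the check part C_{P} ∪ fix_{G_P}(M_G) is incoherent (some constraint of P is violated), then the transformed program τ(u,P) ∪ fix_{G_P}(M_G) has a unique answer set M_u in which the fresh atom u is true; conversely, if C_{P} ∪ fix_{G_P}(M_G) has (unique) answer set M_C, then τ(u,P) ∪ fix_{G_P}(M_G) has the unique answer set M_C in which u is false. -/
/-- `τ(u,P)`: each constraint `← B` of the check part is replaced by the rule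
`u ← B`; non-constraint rules are kept unchanged. -/
def tauProg {α : Type} (u : α) (C : Set (Rule α)) : Set (Rule α) :=
  {r' | ∃ r ∈ C, (r.head ≠ none ∧ r' = r) ∨ (r.head = none ∧ r' = ⟨some u, r.body⟩)}


/-!
With the guess fixed, the check part `C ∪ fix(M_G)` is stratified, so the least model of its
reduct, seen as an operator in the candidate `M`, has exactly one fixed point `N`: its values up
to level `n` depend only on `M` below level `n`. The constraints of `fix(M_G)` never fire at `N`,
because the heads of `C` avoid the guess atoms. The fresh atom `u` occurs in `τ(u,P)` only as a
head, so the answer sets of `τ(u,P) ∪ fix(M_G)` are exactly `N`, enlarged by `u` when some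
constraint of `C` fires at `N`, while `C ∪ fix(M_G)` has the answer set `N` if no constraint of
`C` fires at `N` and none otherwise.
-/

variable {α : Type}

namespace Rule

def Fires (r : Rule α) (M X : Set α) : Prop :=
  (∀ a ∈ negBody r, a ∉ M) ∧ posBody r ⊆ X

theorem Fires.mono_right {r : Rule α} {M X Y : Set α} (h : r.Fires M X) (hXY : X ⊆ Y) :
    r.Fires M Y :=
  ⟨h.1, h.2.trans hXY⟩

theorem Fires.of_inter_eq {P : Set (Rule α)} {r : Rule α} (hr : r ∈ P) {M M' X X' : Set α}
    (hM : M ∩ atoms P = M' ∩ atoms P) (hX : X ∩ atoms P = X' ∩ atoms P) :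
    r.Fires M X → r.Fires M' X' := by
  rintro ⟨hneg, hpos⟩
  refine ⟨fun a ha haM' => hneg a ha ?_, fun a ha => ?_⟩
  · have : a ∈ M' ∩ atoms P := ⟨haM', r, hr, Or.inr (Or.inr ha)⟩
    exact (hM ▸ this).1
  · have : a ∈ X ∩ atoms P := ⟨hpos ha, r, hr, Or.inr (Or.inl ha)⟩
    exact (hX ▸ this).1

theorem fires_congr {P : Set (Rule α)} {r : Rule α} (hr : r ∈ P) {M M' X X' : Set α}
    (hM : M ∩ atoms P = M' ∩ atoms P) (hX : X ∩ atoms P = X' ∩ atoms P) :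
    r.Fires M X ↔ r.Fires M' X' :=
  ⟨Fires.of_inter_eq hr hM hX, Fires.of_inter_eq hr hM.symm hX.symm⟩

end Rule

/-- The immediate-consequence operator of the Gelfond–Lifschitz reduct `P^M`. -/
def reductConseq (P : Set (Rule α)) (M : Set α) : Set α →o Set α where
  toFun X := {h | ∃ r ∈ P, r.head = some h ∧ r.Fires M X}
  monotone' _ _ hXY := fun _ ⟨r, hr, hh, hf⟩ => ⟨r, hr, hh, hf.mono_right hXY⟩

def leastModel (P : Set (Rule α)) (M : Set α) : Set α :=
  (reductConseq P M).lfp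

def ConstraintFires (P : Set (Rule α)) (M X : Set α) : Prop :=
  ∃ r ∈ P, r.head = none ∧ r.Fires M X

theorem ConstraintFires.mono_right {P : Set (Rule α)} {M X Y : Set α}
    (h : ConstraintFires P M X) (hXY : X ⊆ Y) : ConstraintFires P M Y :=
  let ⟨r, hr, hh, hf⟩ := h
  ⟨r, hr, hh, hf.mono_right hXY⟩

theorem constraintFires_union {P Q : Set (Rule α)} {M X : Set α} :
    ConstraintFires (P ∪ Q) M X ↔ ConstraintFires P M X ∨ ConstraintFires Q M X := by
  simp only [ConstraintFires, Set.mem_union, or_and_right, exists_or]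

theorem constraintFires_congr {P : Set (Rule α)} {M M' X X' : Set α}
    (hM : M ∩ atoms P = M' ∩ atoms P) (hX : X ∩ atoms P = X' ∩ atoms P) :
    ConstraintFires P M X ↔ ConstraintFires P M' X' := by
  simp only [ConstraintFires]
  exact exists_congr fun r => and_congr_right fun hr =>
    and_congr_right fun _ => Rule.fires_congr hr hM hX

theorem reductConseq_congr {P : Set (Rule α)} {M M' X X' : Set α}
    (hM : M ∩ atoms P = M' ∩ atoms P) (hX : X ∩ atoms P = X' ∩ atoms P) :
    reductConseq P M X = reductConseq P M' X' := by
  ext h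
  exact exists_congr fun r => and_congr_right fun hr =>
    and_congr_right fun _ => Rule.fires_congr hr hM hX

theorem leastModel_congr {P : Set (Rule α)} {M M' : Set α}
    (hM : M ∩ atoms P = M' ∩ atoms P) : leastModel P M = leastModel P M' := by
  have : reductConseq P M = reductConseq P M' :=
    OrderHom.ext _ _ (funext fun _ => reductConseq_congr hM rfl)
  rw [leastModel, this, leastModel]

theorem reductConseq_leastModel (P : Set (Rule α)) (M : Set α) :
    reductConseq P M (leastModel P M) = leastModel P M :=
  OrderHom.map_lfp _

theorem leastModel_subset {P : Set (Rule α)} {M X : Set α} (h : reductConseq P M X ⊆ X) :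
    leastModel P M ⊆ X :=
  OrderHom.lfp_le _ h

theorem heads_subset_atoms (P : Set (Rule α)) : heads P ⊆ atoms P :=
  fun _ ⟨r, hr, hh⟩ => ⟨r, hr, Or.inl hh⟩

theorem leastModel_subset_heads (P : Set (Rule α)) (M : Set α) : leastModel P M ⊆ heads P :=
  leastModel_subset fun _ ⟨r, hr, hh, _⟩ => ⟨r, hr, hh⟩

theorem modelsReduct_iff {P : Set (Rule α)} {M X : Set α} :
    modelsReduct P M X ↔ reductConseq P M X ⊆ X ∧ ¬ ConstraintFires P M X := by
  constructor
  · intro h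
    refine ⟨fun x ⟨r, hr, hh, hneg, hpos⟩ => ?_, fun ⟨r, hr, hh, hneg, hpos⟩ => ?_⟩
    · obtain ⟨x', hh', hx'⟩ := h r hr hneg hpos
      rw [hh, Option.some_inj] at hh'
      exact hh' ▸ hx'
    · obtain ⟨x', hh', -⟩ := h r hr hneg hpos
      simp [hh] at hh'
  · rintro ⟨hcons, hnc⟩ r hr hneg hpos
    cases hh : r.head with
    | none => exact absurd ⟨r, hr, hh, hneg, hpos⟩ hnc
    | some x => exact ⟨x, rfl, hcons ⟨r, hr, hh, hneg, hpos⟩⟩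

theorem isAnswerSet_iff {P : Set (Rule α)} {M : Set α} :
    isAnswerSet P M ↔ leastModel P M = M ∧ ¬ ConstraintFires P M M := by
  simp only [isAnswerSet, modelsReduct_iff]
  constructor
  · rintro ⟨-, ⟨hcons, hnc⟩, hmin⟩
    have hle := leastModel_subset hcons
    refine ⟨hle.eq_of_not_ssubset fun hlt => hmin _ hlt ⟨?_, ?_⟩, hnc⟩
    · exact (reductConseq_leastModel P M).le
    · exact fun hc => hnc (hc.mono_right hle)
  · rintro ⟨hfix, hnc⟩
    have hcons : reductConseq P M M = M := by
      simpa only [hfix] using reductConseq_leastModel P M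
    refine ⟨?_, ⟨hcons.le, hnc⟩, fun M' hlt ⟨hcons', _⟩ => ?_⟩
    · exact hfix ▸ (leastModel_subset_heads P M).trans (heads_subset_atoms P)
    · exact hlt.not_subset (hfix ▸ leastModel_subset hcons')

def IsLevelMapping (P : Set (Rule α)) (s : α → ℕ) : Prop :=
  ∀ r ∈ P, ∀ h, r.head = some h →
    (∀ a ∈ posBody r, s a ≤ s h) ∧ (∀ a ∈ negBody r, s a < s h)

def AgreeBelow (s : α → ℕ) (n : ℕ) (M M' : Set α) : Prop :=
  ∀ a, s a < n → (a ∈ M ↔ a ∈ M')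

/-- The fixed point agrees below level `n` with the `n`-th iterate of `f` on `∅`. -/
theorem existsUnique_eq_of_agreeBelow {f : Set α → Set α} (s : α → ℕ)
    (hf : ∀ n M M', AgreeBelow s n M M' → AgreeBelow s (n + 1) (f M) (f M')) :
    ∃! M, f M = M := by
  set seq : ℕ → Set α := fun n => f^[n] ∅ with hseq
  have hstable : ∀ n m, n ≤ m → AgreeBelow s n (seq m) (seq n) := by
    intro n
    induction n with
    | zero => exact fun _ _ a ha => absurd ha (Nat.not_lt_zero _)
    | succ n ih =>
      intro m hm
      obtain ⟨k, rfl⟩ : ∃ k, m = k + 1 := ⟨m - 1, by omega⟩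
      simpa only [hseq, Function.iterate_succ_apply'] using hf n _ _ (ih k (by omega))
  set N := {a | a ∈ seq (s a + 1)}
  have hNfix : f N = N := by
    ext a
    have hN : AgreeBelow s (s a) N (seq (s a)) := fun b hb =>
      (hstable (s b + 1) (s a) hb b (lt_add_one _)).symm
    have := hf (s a) _ _ hN a (lt_add_one _)
    rwa [hseq, ← Function.iterate_succ_apply' f] at this
  refine ⟨N, hNfix, fun M hM => ?_⟩
  have hagree : ∀ n, AgreeBelow s n M N := by
    intro n
    induction n with
    | zero => exact fun a ha => absurd ha (Nat.not_lt_zero _)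
    | succ n ih => simpa only [hM, hNfix] using hf n _ _ ih
  ext a
  exact hagree (s a + 1) a (lt_add_one _)

theorem IsLevelMapping.agreeBelow_leastModel {P : Set (Rule α)} {s : α → ℕ}
    (hs : IsLevelMapping P s) {n : ℕ} {M M' : Set α} (h : AgreeBelow s n M M') :
    AgreeBelow s (n + 1) (leastModel P M) (leastModel P M') := by
  suffices key : ∀ {M M'}, AgreeBelow s n M M' →
      leastModel P M ⊆ {a | s a ≤ n → a ∈ leastModel P M'} from
    fun a ha => ⟨fun haM => key h haM (by omega),
      fun haM' => key (fun b hb => (h b hb).symm) haM' (by omega)⟩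
  intro M M' h
  -- body atoms of a rule with head `x` lie at level `≤ s x`, negative ones strictly below
  refine leastModel_subset fun x ⟨r, hr, hh, hneg, hpos⟩ hx => ?_
  have ⟨hlev_pos, hlev_neg⟩ := hs r hr x hh
  rw [← reductConseq_leastModel]
  refine ⟨r, hr, hh, fun a ha haM' => hneg a ha ((h a ?_).2 haM'), fun a ha => hpos ha ?_⟩
  · exact lt_of_lt_of_le (hlev_neg a ha) hx
  · exact (hlev_pos a ha).trans hx

theorem existsUnique_leastModel_eq_of_stratified {P : Set (Rule α)} (hP : stratified P) :
    ∃! M, leastModel P M = M :=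
  let ⟨s, hs⟩ := hP
  existsUnique_eq_of_agreeBelow s fun _ _ _ => IsLevelMapping.agreeBelow_leastModel hs

theorem atoms_fixProg_subset (Q : Set (Rule α)) (M : Set α) :
    atoms (fixProg Q M) ⊆ atoms Q := by
  rintro a ⟨r, ⟨b, hb, rfl⟩ | ⟨b, hb, rfl⟩, h⟩
  · obtain rfl : b = a := by simpa using h
    exact hb.2
  · obtain rfl : a = b := by simpa using h
    exact hb.1

theorem atoms_union_fixProg_subset (C Q : Set (Rule α)) (M : Set α) :
    atoms (C ∪ fixProg Q M) ⊆ atoms (Q ∪ C) := by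
  rw [atoms_union, atoms_union, Set.union_comm (atoms Q)]
  exact Set.union_subset_union_right _ (atoms_fixProg_subset Q M)

theorem heads_fixProg_subset (Q : Set (Rule α)) (M : Set α) : heads (fixProg Q M) ⊆ M := by
  rintro a ⟨r, ⟨b, hb, rfl⟩ | ⟨b, hb, rfl⟩, hh⟩
  · exact Option.some_inj.mp hh ▸ hb.1
  · cases hh

theorem IsLevelMapping.union_fixProg {C : Set (Rule α)} {s : α → ℕ} (hs : IsLevelMapping C s)
    (Q : Set (Rule α)) (M : Set α) : IsLevelMapping (C ∪ fixProg Q M) s := by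
  rintro r (hr | ⟨b, hb, rfl⟩ | ⟨b, hb, rfl⟩) h hh
  · exact hs r hr h hh
  · simp [posBody, negBody]
  · cases hh

theorem not_constraintFires_fixProg {Q : Set (Rule α)} {M M' X : Set α}
    (h : X ∩ atoms Q ⊆ M) : ¬ ConstraintFires (fixProg Q M) M' X := by
  rintro ⟨r, ⟨b, hb, rfl⟩ | ⟨b, hb, rfl⟩, hh, -, hpos⟩
  · cases hh
  · exact hb.2 (h ⟨hpos (by simp [posBody]), hb.1⟩)

theorem not_constraintFires_fixProg_of_subset_heads {C Q : Set (Rule α)} {M N : Set α}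
    (hdisj : heads C ∩ atoms Q = ∅) (hN : N ⊆ heads (C ∪ fixProg Q M)) :
    ¬ ConstraintFires (fixProg Q M) N N := by
  refine not_constraintFires_fixProg fun a ⟨haN, haQ⟩ => ?_
  obtain ⟨r, hr | hr, hh⟩ := hN haN
  · exact (hdisj.subset ⟨⟨r, hr, hh⟩, haQ⟩).elim
  · exact heads_fixProg_subset Q M ⟨r, hr, hh⟩

theorem union_setOf_eq_and_inter_of_notMem {u : α} {A : Set α} (hu : u ∉ A) (L : Set α)
    (p : Prop) : (L ∪ {x | x = u ∧ p}) ∩ A = L ∩ A := by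
  ext a
  constructor
  · rintro ⟨ha | ⟨rfl, -⟩, haA⟩
    exacts [⟨ha, haA⟩, absurd haA hu]
  · exact fun ⟨ha, haA⟩ => ⟨Or.inl ha, haA⟩

section Tau

variable {u : α} {C D : Set (Rule α)}

theorem reductConseq_tauProg_union (M X : Set α) :
    reductConseq (tauProg u C ∪ D) M X =
      reductConseq (C ∪ D) M X ∪ {x | x = u ∧ ConstraintFires C M X} := by
  ext x
  constructor
  · rintro ⟨r', ⟨r, hr, ⟨-, rfl⟩ | ⟨hnone, rfl⟩⟩ | hr', hh, hf⟩
    · exact Or.inl ⟨r', Or.inl hr, hh, hf⟩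
    · exact Or.inr ⟨(Option.some_inj.mp hh).symm, r, hr, hnone, hf⟩
    · exact Or.inl ⟨r', Or.inr hr', hh, hf⟩
  · rintro (⟨r, hr | hr, hh, hf⟩ | ⟨rfl, r, hr, hnone, hf⟩)
    · exact ⟨r, Or.inl ⟨r, hr, Or.inl ⟨by simp [hh], rfl⟩⟩, hh, hf⟩
    · exact ⟨r, Or.inr hr, hh, hf⟩
    · exact ⟨⟨some x, r.body⟩, Or.inl ⟨r, hr, Or.inr ⟨hnone, rfl⟩⟩, rfl, hf⟩

theorem not_constraintFires_tauProg (M X : Set α) : ¬ ConstraintFires (tauProg u C) M X := by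
  rintro ⟨r', ⟨r, -, ⟨hne, rfl⟩ | ⟨-, rfl⟩⟩, hh, -⟩
  · exact hne hh
  · cases hh

theorem leastModel_tauProg_union (hu : u ∉ atoms (C ∪ D)) (M : Set α) :
    leastModel (tauProg u C ∪ D) M = leastModel (C ∪ D) M ∪
      {x | x = u ∧ ConstraintFires C M (leastModel (C ∪ D) M)} := by
  have huC : u ∉ atoms C := fun h => hu (atoms_union C D ▸ Or.inl h)
  set L := leastModel (C ∪ D) M
  have hmono : L ⊆ leastModel (tauProg u C ∪ D) M := OrderHom.lfp.monotone
    (fun X => (reductConseq_tauProg_union M X).superset.trans' Set.subset_union_left)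
  refine (leastModel_subset ?_).antisymm ?_
  · -- `u` is fresh, so adding it to `L` is invisible to the rules of `C ∪ D`
    rw [reductConseq_tauProg_union,
      reductConseq_congr rfl (union_setOf_eq_and_inter_of_notMem hu _ _), reductConseq_leastModel,
      constraintFires_congr rfl (union_setOf_eq_and_inter_of_notMem huC _ _)]
  · rintro x (hx | ⟨rfl, hfire⟩)
    · exact hmono hx
    · rw [← reductConseq_leastModel, reductConseq_tauProg_union]
      exact Or.inr ⟨rfl, hfire.mono_right hmono⟩

theorem isAnswerSet_tauProg_union_iff (hu : u ∉ atoms (C ∪ D)) {M : Set α} :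
    isAnswerSet (tauProg u C ∪ D) M ↔ ∃ N, leastModel (C ∪ D) N = N ∧
      ¬ ConstraintFires D N N ∧ M = N ∪ {x | x = u ∧ ConstraintFires C N N} := by
  have huC : u ∉ atoms C := fun h => hu (atoms_union C D ▸ Or.inl h)
  have huD : u ∉ atoms D := fun h => hu (atoms_union C D ▸ Or.inr h)
  rw [isAnswerSet_iff, leastModel_tauProg_union hu, constraintFires_union,
    or_iff_right (not_constraintFires_tauProg _ _)]
  constructor
  · rintro ⟨hfix, hD⟩
    set N := leastModel (C ∪ D) M
    have hMN : ∀ A, u ∉ A → M ∩ A = N ∩ A := fun A hA => by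
      rw [← hfix]
      exact union_setOf_eq_and_inter_of_notMem hA _ _
    refine ⟨N, (leastModel_congr (hMN _ hu)).symm, ?_, ?_⟩
    · exact fun h => hD ((constraintFires_congr (hMN _ huD) (hMN _ huD)).2 h)
    · conv_lhs => rw [← hfix]
      rw [constraintFires_congr (hMN _ huC) rfl]
  · rintro ⟨N, hN, hD, rfl⟩
    have hMN : ∀ A, u ∉ A → (N ∪ {x | x = u ∧ ConstraintFires C N N}) ∩ A = N ∩ A :=
      fun A hA => union_setOf_eq_and_inter_of_notMem hA N _
    rw [leastModel_congr (hMN _ hu), hN, constraintFires_congr (hMN _ huC) rfl]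
    exact ⟨rfl, fun h => hD ((constraintFires_congr (hMN _ huD) (hMN _ huD)).1 h)⟩

end Tau

section UniqueFixedPoint

variable {C D : Set (Rule α)} {N : Set α}

theorem isAnswerSet_union_iff_of_leastModel_eq_iff
    (hN : ∀ M, leastModel (C ∪ D) M = M ↔ M = N) (hD : ¬ ConstraintFires D N N)
    {M : Set α} : isAnswerSet (C ∪ D) M ↔ M = N ∧ ¬ ConstraintFires C N N := by
  rw [isAnswerSet_iff, hN, constraintFires_union]
  constructor
  · rintro ⟨rfl, hc⟩
    exact ⟨rfl, fun h => hc (Or.inl h)⟩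
  · rintro ⟨rfl, hC⟩
    exact ⟨rfl, (·.elim hC hD)⟩

theorem isAnswerSet_tauProg_union_iff_of_leastModel_eq_iff {u : α} (hu : u ∉ atoms (C ∪ D))
    (hN : ∀ M, leastModel (C ∪ D) M = M ↔ M = N) (hD : ¬ ConstraintFires D N N)
    {M : Set α} :
    isAnswerSet (tauProg u C ∪ D) M ↔ M = N ∪ {x | x = u ∧ ConstraintFires C N N} := by
  rw [isAnswerSet_tauProg_union_iff hu]
  constructor
  · rintro ⟨N', hN', -, rfl⟩
    rw [(hN N').1 hN']
  · rintro rfl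
    exact ⟨N, (hN N).2 rfl, hD, rfl⟩

end UniqueFixedPoint

theorem tau_rewriting_general {α : Type} (G C : Set (Rule α)) (u : α)
    (hC : stratified C)
    (hdisj : heads C ∩ atoms G = ∅)
    (hu : u ∉ atoms (G ∪ C))
    (MG : Set α) :
    ((¬ ∃ W, isAnswerSet (C ∪ fixProg G MG) W) →
        ∃ Mu, isAnswerSet (tauProg u C ∪ fixProg G MG) Mu ∧ u ∈ Mu ∧
          ∀ M', isAnswerSet (tauProg u C ∪ fixProg G MG) M' → M' = Mu) ∧
    (∀ MC, isAnswerSet (C ∪ fixProg G MG) MC →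
        isAnswerSet (tauProg u C ∪ fixProg G MG) MC ∧ u ∉ MC ∧
          ∀ M', isAnswerSet (tauProg u C ∪ fixProg G MG) M' → M' = MC) := by
  set F := fixProg G MG
  have hQ : stratified (C ∪ F) :=
    let ⟨s, hs⟩ := hC
    ⟨s, IsLevelMapping.union_fixProg hs G MG⟩
  obtain ⟨N, hNfix, hNuniq⟩ := existsUnique_leastModel_eq_of_stratified hQ
  have hN : ∀ M, leastModel (C ∪ F) M = M ↔ M = N := fun M => ⟨hNuniq M, (· ▸ hNfix)⟩
  have hNheads : N ⊆ heads (C ∪ F) := hNfix ▸ leastModel_subset_heads _ _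
  have hF : ¬ ConstraintFires F N N := not_constraintFires_fixProg_of_subset_heads hdisj hNheads
  have huQ : u ∉ atoms (C ∪ F) := fun h => hu (atoms_union_fixProg_subset C G MG h)
  have huN : u ∉ N := fun h => huQ (heads_subset_atoms _ (hNheads h))
  have hASQ : ∀ M, isAnswerSet (C ∪ F) M ↔ M = N ∧ ¬ ConstraintFires C N N :=
    fun _ => isAnswerSet_union_iff_of_leastModel_eq_iff hN hF
  have hAStau : ∀ M, isAnswerSet (tauProg u C ∪ F) M ↔
      M = N ∪ {x | x = u ∧ ConstraintFires C N N} :=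
    fun _ => isAnswerSet_tauProg_union_iff_of_leastModel_eq_iff huQ hN hF
  refine ⟨fun hno => ?_, fun MC hMC => ?_⟩
  · have hfire : ConstraintFires C N N := by_contra fun h => hno ⟨N, (hASQ N).2 ⟨rfl, h⟩⟩
    exact ⟨_, (hAStau _).2 rfl, Or.inr ⟨rfl, hfire⟩, fun M' => (hAStau M').1⟩
  · obtain ⟨rfl, hquiet⟩ := (hASQ MC).1 hMC
    simp only [hquiet, and_false, Set.ofPred_false, Set.union_empty] at hAStau
    exact ⟨(hAStau MC).2 rfl, huN, fun M' => (hAStau M').1⟩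

/-- Rewriting of a universal Guess&Check subprogram: for an answer set `M_G` of
the guess part, if the check fails (the check part with `M_G` fixed is
incoherent) then `τ(u,P) ∪ fix_{G_P}(M_G)` has a unique answer set in which `u`
is true; if the check has (unique) answer set `M_C` then `τ(u,P) ∪ fix_{G_P}(M_G)`
has the unique answer set `M_C`, in which `u` is false. -/
theorem tau_rewriting {α : Type} (G C : Set (Rule α)) (u : α)
    (hG : isChoiceProgram G) (hC : stratified C)
    (hdisj : heads C ∩ atoms G = ∅)
    (hu : u ∉ atoms (G ∪ C))
    (MG : Set α) (hMG : isAnswerSet G MG) :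
    ((¬ ∃ W, isAnswerSet (C ∪ fixProg G MG) W) →
        ∃ Mu, isAnswerSet (tauProg u C ∪ fixProg G MG) Mu ∧ u ∈ Mu ∧
          ∀ M', isAnswerSet (tauProg u C ∪ fixProg G MG) M' → M' = Mu) ∧
    (∀ MC, isAnswerSet (C ∪ fixProg G MG) MC →
        isAnswerSet (tauProg u C ∪ fixProg G MG) MC ∧ u ∉ MC ∧
          ∀ M', isAnswerSet (tauProg u C ∪ fixProg G MG) M' → M' = MC) :=
  tau_rewriting_general G C u hC hdisj hu MG
end
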